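/- arXiv:1003.4917 — 2 statements merged into one kernel-verified Lean document; each statement's English description precedes it below -/
import Mathlib

section
/- For every x > 0, every i ∈ {1,…,m} and every λ ∈ ℂ with λ ≠ -β_i, the quantity m_i(x,λ) := (∂^{m_i}/(-∂β)^{m_i})[ (e^{(λ+β)x} Û_{[-x,0]}(-β) - Û_{[-x,0]}(λ)) / (λ+β) ] evaluated at β = β_i equals ∫_{[-x,0]} e^{-λz} μ_i(dz), where μ_i is the restriction to [-x,0] of the convolution of the (complex) measure 1_{[-x,0]}(u) u^{m_i} e^{-β_i u} du with the measure 1_{[-x,0]}(y) Û(dy). In particular m_i(x,·) extends to an entire function of λ which is the Laplace transform of a measure supported in [-x,0]. -/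
open MeasureTheory ProbabilityTheory Filter Set Complex
open scoped ENNReal NNReal

noncomputable section

/-- A real-valued Lévy process (càdlàg, stationary independent increments, `X 0 = 0`)
killed at an independent exponential time `ζ` of rate `q ≥ 0`, with Lévy exponent `φ`
given by the Lévy–Khintchine formula with drift `drift`, Gaussian coefficient `σ2`
and Lévy measure `π`. -/
structure KilledLevy (Ω : Type*) [MeasurableSpace Ω] where
  P : Measure Ω
  isProb : IsProbabilityMeasure P
  X : ℝ → Ω → ℝ
  ζ : Ω → ℝ≥0∞
  q : ℝ
  drift : ℝ
  σ2 : ℝ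
  π : Measure ℝ
  φ : ℂ → ℂ
  hq : 0 ≤ q
  hσ2 : 0 ≤ σ2
  hX0 : ∀ ω, X 0 ω = 0
  hXmeas : ∀ t : ℝ, Measurable (X t)
  hζmeas : Measurable ζ
  /-- right-continuity of paths -/
  hrc : ∀ ω, ∀ t : ℝ, 0 ≤ t → ContinuousWithinAt (fun s => X s ω) (Ici t) t
  /-- existence of left limits -/
  hll : ∀ ω, ∀ t : ℝ, 0 < t → ∃ l : ℝ, Tendsto (fun s => X s ω) (nhdsWithin t (Iio t)) (nhds l)
  /-- stationarity of increments -/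
  hstat : ∀ s t : ℝ, 0 ≤ s → s ≤ t →
    P.map (fun ω => X t ω - X s ω) = P.map (X (t - s))
  /-- independence of increments -/
  hincr : ∀ (k : ℕ) (ts : Fin (k + 1) → ℝ), Monotone ts → 0 ≤ ts 0 →
    iIndepFun
      (fun (i : Fin k) ω => X (ts i.succ) ω - X (ts i.castSucc) ω) P
  hπ0 : π {0} = 0
  hπint : (∫⁻ y : ℝ, ENNReal.ofReal (min 1 (y ^ 2)) ∂π) ≠ ⊤
  /-- `ζ` is exponentially distributed with rate `q` (`ζ = ∞` a.s. when `q = 0`) -/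
  hζlaw : ∀ t : ℝ, 0 ≤ t → P {ω | ENNReal.ofReal t < ζ ω} = ENNReal.ofReal (Real.exp (-q * t))
  /-- `ζ` is independent of the path of `X` -/
  hζindep : Indep (MeasurableSpace.comap ζ inferInstance)
      (⨆ t : ℝ, MeasurableSpace.comap (X t) inferInstance) P
  /-- Lévy–Khintchine formula on the imaginary axis -/
  hLK : ∀ u : ℝ, φ (u * Complex.I) = q + drift * (u * Complex.I) - σ2 / 2 * (u * Complex.I) ^ 2 +
      ∫ y : ℝ, (1 - Complex.exp (-(u * Complex.I) * y)
        - (u * Complex.I) * y * (if |y| ≤ 1 then 1 else 0)) ∂π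
  /-- the characteristic identity `E[e^{-iuX_t} 1_{t<ζ}] = e^{-tφ(iu)}` -/
  hchar : ∀ t : ℝ, 0 ≤ t → ∀ u : ℝ,
      (∫ ω, (if ENNReal.ofReal t < ζ ω then Complex.exp (-(u * Complex.I) * X t ω) else 0) ∂P) =
        Complex.exp (-(t : ℂ) * φ (u * Complex.I))
  hφne : φ ≠ 0

namespace KilledLevy

variable {Ω : Type*} [MeasurableSpace Ω] (L : KilledLevy Ω)

/-- running supremum `S_t` -/
def Sr (t : ℝ) (ω : Ω) : ℝ := sSup ((fun s => L.X s ω) '' Icc 0 t)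

/-- running infimum `I_t` -/
def Ir (t : ℝ) (ω : Ω) : ℝ := sInf ((fun s => L.X s ω) '' Icc 0 t)

/-- overall supremum `S_ζ` -/
def Sz (ω : Ω) : ℝ := sSup ((fun t => L.X t ω) '' {t : ℝ | 0 ≤ t ∧ ENNReal.ofReal t < L.ζ ω})

/-- overall infimum `I_ζ` -/
def Iz (ω : Ω) : ℝ := sInf ((fun t => L.X t ω) '' {t : ℝ | 0 ≤ t ∧ ENNReal.ofReal t < L.ζ ω})

/-- position at death, `X_ζ` (left limit of the path at the killing time) -/
def Xz (ω : Ω) : ℝ :=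
  limUnder (nhdsWithin ((L.ζ ω).toReal) (Iio ((L.ζ ω).toReal))) (fun t => L.X t ω)

/-- `V_x = inf {t : X_t - S_t < -x}` -/
def Vlow (x : ℝ) (ω : Ω) : ℝ≥0∞ :=
  ⨅ t : {t : ℝ // 0 ≤ t ∧ L.X t ω - L.Sr t ω < -x}, ENNReal.ofReal t.1

/-- `V^x = inf {t : X_t - I_t > x}` -/
def Vup (x : ℝ) (ω : Ω) : ℝ≥0∞ :=
  ⨅ t : {t : ℝ // 0 ≤ t ∧ x < L.X t ω - L.Ir t ω}, ENNReal.ofReal t.1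

/-- `U_x = inf {t : S_t - I_t > x}` -/
def Uxt (x : ℝ) (ω : Ω) : ℝ≥0∞ :=
  ⨅ t : {t : ℝ // 0 ≤ t ∧ x < L.Sr t ω - L.Ir t ω}, ENNReal.ofReal t.1

/-- `T_x = inf {t : X_t < -x}` (first passage below `-x`) -/
def Tlow (x : ℝ) (ω : Ω) : ℝ≥0∞ :=
  ⨅ t : {t : ℝ // 0 ≤ t ∧ L.X t ω < -x}, ENNReal.ofReal t.1

/-- `T^x = inf {t : X_t > x}` (first passage above `x`) -/
def Tup (x : ℝ) (ω : Ω) : ℝ≥0∞ :=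
  ⨅ t : {t : ℝ // 0 ≤ t ∧ x < L.X t ω}, ENNReal.ofReal t.1

/-- `T_a^b = inf {t : X_t ∉ [-a, b]}` (exit time of `[-a,b]`) -/
def Tab (a b : ℝ) (ω : Ω) : ℝ≥0∞ :=
  ⨅ t : {t : ℝ // 0 ≤ t ∧ L.X t ω ∉ Icc (-a) b}, ENNReal.ofReal t.1

/-- `E ∫_0^ζ e^{-λ₁ I_t} 1_{S_t - I_t ≤ x} e^{-λ₂ (X_t - I_t)} dt` -/
def potA (x : ℝ) (l1 l2 : ℂ) : ℂ :=
  ∫ ω, (∫ t in Ioi (0 : ℝ),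
    (if ENNReal.ofReal t < L.ζ ω ∧ L.Sr t ω - L.Ir t ω ≤ x then
      Complex.exp (-l1 * L.Ir t ω) * Complex.exp (-l2 * (L.X t ω - L.Ir t ω)) else 0)) ∂L.P

/-- `E ∫_0^ζ e^{-λ₂ S_t} 1_{S_t - I_t ≤ x} e^{-λ₁ (X_t - S_t)} dt` -/
def potB (x : ℝ) (l1 l2 : ℂ) : ℂ :=
  ∫ ω, (∫ t in Ioi (0 : ℝ),
    (if ENNReal.ofReal t < L.ζ ω ∧ L.Sr t ω - L.Ir t ω ≤ x then
      Complex.exp (-l2 * L.Sr t ω) * Complex.exp (-l1 * (L.X t ω - L.Sr t ω)) else 0)) ∂L.P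

end KilledLevy

/-- number of earlier occurrences of the value `v i` in the family `v`, i.e.
the multiplicities `n_j = #{k < j : γ_k = γ_j}` and `m_i = #{k < i : β_k = β_i}`. -/
def multBefore {k : ℕ} (v : Fin k → ℂ) (i : Fin k) : ℕ :=
  (Finset.univ.filter (fun k' => k' < i ∧ v k' = v i)).card

/-- Assumption A : the restriction of the Lévy measure to `(0,∞)` is
`∑ c_j y^{n_j}/n_j! e^{-γ_j y} dy` where `-γ_1, …, -γ_n` (with `Re γ_j > 0`) are listed
with multiplicity, `n_j = #{k < j : γ_k = γ_j}`. -/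
structure AssumptionA {Ω : Type*} [MeasurableSpace Ω] (L : KilledLevy Ω) where
  n : ℕ
  c : Fin n → ℂ
  γ : Fin n → ℂ
  hγ : ∀ j, 0 < (γ j).re
  hdensity : ∀ s : Set ℝ, MeasurableSet s → s ⊆ Ioi 0 →
    ((L.π s).toReal : ℂ) = ∫ y in s, ∑ j, c j * (y : ℂ) ^ (multBefore γ j) /
      (Nat.factorial (multBefore γ j)) * Complex.exp (-γ j * y)

namespace AssumptionA

variable {Ω : Type*} [MeasurableSpace Ω] {L : KilledLevy Ω} (A : AssumptionA L)

/-- `n_j = #{k < j : γ_k = γ_j}` -/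
def nj (j : Fin A.n) : ℕ := multBefore A.γ j

/-- the entries `i_j(λ)` -/
def ifun (l : ℂ) (j : Fin A.n) : ℂ :=
  (-1 : ℂ) ^ (A.nj j) * iteratedDeriv (A.nj j) (fun g => 1 / (l + g)) (A.γ j)

/-- the line `l = (1_{n_j = 0})_j` -/
def lvec (j : Fin A.n) : ℂ := if A.nj j = 0 then 1 else 0

end AssumptionA

/-- The Wiener–Hopf factorisation data : `ψ` is the exponent of a (killed) subordinator,
`ccψ` the exponent of the negative of a (killed) subordinator, `ψ·ccψ = φ` on `iℝ`,
and `Uh = Û` is the measure on `(-∞,0]` whose Laplace transform is `1/ccψ`. -/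
structure WHFactor {Ω : Type*} [MeasurableSpace Ω] (L : KilledLevy Ω) where
  ψ : ℂ → ℂ
  ccψ : ℂ → ℂ
  κp : ℝ
  dp : ℝ
  νp : Measure ℝ
  hκp : 0 ≤ κp
  hdp : 0 ≤ dp
  hνpsupp : νp (Iic 0) = 0
  hνpint : (∫⁻ y : ℝ, ENNReal.ofReal (min 1 y) ∂νp) ≠ ⊤
  hψrep : ∀ l : ℂ, 0 ≤ l.re →
    ψ l = κp + dp * l + ∫ y : ℝ, (1 - Complex.exp (-l * y)) ∂νp
  κm : ℝ
  dm : ℝ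
  νm : Measure ℝ
  hκm : 0 ≤ κm
  hdm : 0 ≤ dm
  hνmsupp : νm (Ici 0) = 0
  hνmint : (∫⁻ y : ℝ, ENNReal.ofReal (min 1 |y|) ∂νm) ≠ ⊤
  hccψrep : ∀ l : ℂ, l.re ≤ 0 →
    ccψ l = κm - dm * l + ∫ y : ℝ, (1 - Complex.exp (-l * y)) ∂νm
  hfact : ∀ u : ℝ, ψ (u * Complex.I) * ccψ (u * Complex.I) = L.φ (u * Complex.I)
  Uh : Measure ℝ
  hUhsf : SigmaFinite Uh
  hUhsupp : Uh (Ioi 0) = 0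
  hUhint : ∀ l : ℂ, l.re < 0 → Integrable (fun y : ℝ => Complex.exp (-l * y)) Uh
  hUhlap : ∀ l : ℂ, l.re < 0 → (∫ y : ℝ, Complex.exp (-l * y) ∂Uh) = 1 / ccψ l

/-- Wiener–Hopf data together with the normalisation
`ψ(λ) = ∏ (λ+β_i) / ∏ (λ+γ_j)` of the Wiener–Hopf theorem, where `-β_1,…,-β_m`
are the roots of `φ` in `{Re λ < 0}` (with multiplicity), together with `0` in the
appropriate case ; `m = n` or `m = n + 1`. -/
structure WHNorm {Ω : Type*} [MeasurableSpace Ω] (L : KilledLevy Ω) (A : AssumptionA L) extends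
    WHFactor L where
  m : ℕ
  β : Fin m → ℂ
  hψform : ∀ l : ℂ, (∏ j, (l + A.γ j)) ≠ 0 →
    ψ l * ∏ j, (l + A.γ j) = ∏ i, (l + β i)
  hmn : m = A.n ∨ m = A.n + 1

namespace WHNorm

variable {Ω : Type*} [MeasurableSpace Ω] {L : KilledLevy Ω} {A : AssumptionA L}
  (W : WHNorm L A)

/-- `Û_{[-x,0]}(λ)` -/
def UB (x : ℝ) (l : ℂ) : ℂ := ∫ y in Icc (-x) (0 : ℝ), Complex.exp (-l * y) ∂W.Uh

/-- `Û_{(-∞,-x)}(λ)` -/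
def UT (x : ℝ) (l : ℂ) : ℂ := ∫ y in Iio (-x), Complex.exp (-l * y) ∂W.Uh

/-- `m_i = #{k < i : β_k = β_i}` -/
def mi (i : Fin W.m) : ℕ := multBefore W.β i


/-- the entries `m_i(x,λ)` -/
def mfun (x : ℝ) (l : ℂ) (i : Fin W.m) : ℂ :=
  (-1 : ℂ) ^ (W.mi i) * iteratedDeriv (W.mi i)
    (fun b => (Complex.exp ((l + b) * x) * W.UB x (-b) - W.UB x l) / (l + b)) (W.β i)

/-- the entries `n_j(x,λ)` -/
def nfun (x : ℝ) (l : ℂ) (j : Fin A.n) : ℂ :=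
  (-1 : ℂ) ^ (A.nj j) * iteratedDeriv (A.nj j)
    (fun g => (Complex.exp (-l * x) * W.UT x l - Complex.exp (g * x) * W.UT x (-g)) / (l + g))
    (A.γ j)

/-- the entries `v_j(x)` -/
def vfun (x : ℝ) (j : Fin A.n) : ℂ :=
  -((-1 : ℂ) ^ (A.nj j) * iteratedDeriv (A.nj j)
    (fun g => Complex.exp (g * x) * W.UT x (-g)) (A.γ j))

/-- the entries `w_i(x)` -/
def wfun (x : ℝ) (i : Fin W.m) : ℂ :=
  (-1 : ℂ) ^ (W.mi i) * iteratedDeriv (W.mi i)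
    (fun b => Complex.exp (b * x) * W.UB x (-b)) (W.β i)

/-- the entries `w'_i(x)` (here `cu` denotes the constant `ccu(-x)`) -/
def wpfun (x : ℝ) (cu : ℂ) (i : Fin W.m) : ℂ :=
  (-1 : ℂ) ^ (W.mi i) * iteratedDeriv (W.mi i)
    (fun b => b * Complex.exp (b * x) * W.UB x (-b) + cu) (W.β i)

/-- the matrix `W(x)` -/
def Wmat (x : ℝ) : Matrix (Fin W.m) (Fin A.n) ℂ :=
  Matrix.of fun i j =>
    (-1 : ℂ) ^ (W.mi i + A.nj j) * iteratedDeriv (W.mi i)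
      (fun b => iteratedDeriv (A.nj j)
        (fun g => (Complex.exp (b * x) * W.UB x (-b) + Complex.exp (g * x) * W.UT x (-g)) /
          (b - g)) (A.γ j)) (W.β i)


/-- the column `c = (1_{m_i = 0})_i` -/
def cvec (i : Fin W.m) : ℂ := if W.mi i = 0 then 1 else 0

end WHNorm

/-- bordered square matrix `[[a, v], [w, M]]`. -/
def brd1 {k : ℕ} (a : ℂ) (v : Fin k → ℂ) (w : Fin k → ℂ) (M : Matrix (Fin k) (Fin k) ℂ) :
    Matrix (Fin (k + 1)) (Fin (k + 1)) ℂ :=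
  Matrix.of fun i j =>
    Fin.cases (Fin.cases a v j) (fun i' => Fin.cases (w i') (fun j' => M i' j') j) i

/-- doubly bordered square matrix `[[a, b, v], [w₁, w₂, M]]`. -/
def brd2 {k : ℕ} (a b : ℂ) (v : Fin k → ℂ) (w1 w2 : Fin (k + 1) → ℂ)
    (M : Matrix (Fin (k + 1)) (Fin k) ℂ) : Matrix (Fin (k + 2)) (Fin (k + 2)) ℂ :=
  Matrix.of fun i j =>
    Fin.cases (Fin.cases a (Fin.cases b v) j)
      (fun i' => Fin.cases (w1 i') (Fin.cases (w2 i') (fun j' => M i' j')) j) i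

/-- matrix `[w | M]` obtained by prepending the column `w`. -/
def augc {k : ℕ} (w : Fin (k + 1) → ℂ) (M : Matrix (Fin (k + 1)) (Fin k) ℂ) :
    Matrix (Fin (k + 1)) (Fin (k + 1)) ℂ :=
  Matrix.of fun i j => Fin.cases (w i) (fun j' => M i j') j

/-!
For `λ + β ≠ 0`, integrating the exponential in `u` explicitly shows that the difference
quotient `(e^{(λ+β)x} Û_{[-x,0]}(-β) - Û_{[-x,0]}(λ)) / (λ+β)` equals
`∫_{[-x,0]} Û(dy) ∫_{[-x,0]} 1_{[-x,0]}(u+y) e^{-λ(u+y)} e^{-βu} du`.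
This is the Laplace transform, in `β` and in `λ`, of a finite measure whose support is
bounded, so it is entire in both variables and may be differentiated under the integral
sign: each derivative in `β` brings down a factor `-u`.
-/

lemma norm_cexp_mul_le {z w : ℂ} {r R : ℝ} (hz : ‖z‖ ≤ r) (hw : ‖w‖ ≤ R) :
    ‖exp (z * w)‖ ≤ Real.exp (r * R) := by
  refine (norm_exp_le_exp_norm _).trans (Real.exp_le_exp.2 ?_)
  rw [norm_mul]
  exact mul_le_mul hz hw (norm_nonneg w) ((norm_nonneg z).trans hz)

lemma abs_le_of_mem_Icc_neg {x s : ℝ} (hs : s ∈ Icc (-x) 0) : |s| ≤ x :=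
  abs_le.2 ⟨hs.1, hs.2.trans (by linarith [hs.1, hs.2])⟩

section LaplaceTransform

variable {α : Type*} [MeasurableSpace α] {ρ : Measure α} {v c : α → ℂ} {C : ℝ}

lemma MeasureTheory.Integrable.mul_cexp (hv : Integrable v ρ)
    (hc : AEStronglyMeasurable c ρ) (hcC : ∀ᵐ a ∂ρ, ‖c a‖ ≤ C) (z : ℂ) :
    Integrable (fun a => v a * exp (z * c a)) ρ :=
  hv.mul_bdd (by fun_prop) (hcC.mono fun _ ha => norm_cexp_mul_le le_rfl ha)

lemma hasDerivAt_integral_mul_cexp (hv : Integrable v ρ) (hc : AEStronglyMeasurable c ρ)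
    (hcC : ∀ᵐ a ∂ρ, ‖c a‖ ≤ C) (b : ℂ) :
    HasDerivAt (fun z => ∫ a, v a * exp (z * c a) ∂ρ)
      (∫ a, c a * v a * exp (b * c a) ∂ρ) b := by
  have hcv : Integrable (fun a => c a * v a) ρ := hv.bdd_mul hc hcC
  refine (hasDerivAt_integral_of_dominated_loc_of_deriv_le (Metric.ball_mem_nhds b one_pos)
    (F' := fun z a => c a * v a * exp (z * c a))
    (bound := fun a => C * ‖v a‖ * Real.exp ((‖b‖ + 1) * C))
    (.of_forall fun z => (hv.mul_cexp hc hcC z).aestronglyMeasurable) (hv.mul_cexp hc hcC b)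
    (hcv.mul_cexp hc hcC b).aestronglyMeasurable ?_ ?_ ?_).2
  · filter_upwards [hcC] with a ha z hz
    have hz' : ‖z‖ ≤ ‖b‖ + 1 := by
      linarith [norm_le_norm_add_norm_sub' z b, (mem_ball_iff_norm.1 hz).le]
    rw [norm_mul, norm_mul]
    have hC : 0 ≤ C := (norm_nonneg _).trans ha
    gcongr
    exact norm_cexp_mul_le hz' ha
  · exact (hv.norm.const_mul C).mul_const _
  · refine .of_forall fun a z _ => ?_
    simpa [mul_comm, mul_left_comm] using
      (((hasDerivAt_id z).mul_const (c a)).cexp).const_mul (v a)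

lemma iteratedDeriv_integral_mul_cexp (hv : Integrable v ρ) (hc : AEStronglyMeasurable c ρ)
    (hcC : ∀ᵐ a ∂ρ, ‖c a‖ ≤ C) (m : ℕ) :
    iteratedDeriv m (fun z => ∫ a, v a * exp (z * c a) ∂ρ) =
      fun b => ∫ a, c a ^ m * v a * exp (b * c a) ∂ρ := by
  induction m generalizing v with
  | zero => simp
  | succ m ih =>
    have hderiv : deriv (fun z => ∫ a, v a * exp (z * c a) ∂ρ) =
        fun b => ∫ a, c a * v a * exp (b * c a) ∂ρ :=
      funext fun b => (hasDerivAt_integral_mul_cexp hv hc hcC b).deriv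
    rw [iteratedDeriv_succ', hderiv, ih (hv.bdd_mul hc hcC)]
    simp only [pow_succ, mul_assoc]

lemma differentiable_integral_mul_cexp (hv : Integrable v ρ) (hc : AEStronglyMeasurable c ρ)
    (hcC : ∀ᵐ a ∂ρ, ‖c a‖ ≤ C) :
    Differentiable ℂ (fun z => ∫ a, v a * exp (z * c a) ∂ρ) :=
  fun b => (hasDerivAt_integral_mul_cexp hv hc hcC b).differentiableAt

end LaplaceTransform

lemma integral_Icc_indicator_mul_cexp {x y : ℝ} (hy : y ∈ Icc (-x) 0) {l b : ℂ}
    (hlb : l + b ≠ 0) :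
    ∫ u in Icc (-x) 0, (Icc (-x) (0 : ℝ)).indicator (1 : ℝ → ℂ) (u + y) *
        exp (l * -((u : ℂ) + y)) * exp (b * -(u : ℂ)) =
      (exp ((l + b) * x) * exp (b * y) - exp (-l * y)) / (l + b) := by
  have hshift : ∀ u : ℝ, u + y ∈ Icc (-x) 0 ↔ u ∈ Icc (-x - y) (-y) := fun u => by
    simp only [mem_Icc]; constructor <;> rintro ⟨h₁, h₂⟩ <;> constructor <;> linarith
  have hintegrand : ∀ u : ℝ, (Icc (-x) (0 : ℝ)).indicator (1 : ℝ → ℂ) (u + y) *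
      exp (l * -((u : ℂ) + y)) * exp (b * -(u : ℂ)) =
      (Icc (-x - y) (-y)).indicator (fun u : ℝ => exp (-l * y) * exp (-(l + b) * u)) u := by
    intro u
    by_cases hu : u ∈ Icc (-x - y) (-y)
    · rw [indicator_of_mem ((hshift u).2 hu), indicator_of_mem hu, Pi.one_apply, one_mul,
        ← exp_add, ← exp_add]
      congr 1
      ring
    · rw [indicator_of_notMem (mt (hshift u).1 hu), indicator_of_notMem hu, zero_mul, zero_mul]
  have hIcc : Icc (-x) (0 : ℝ) ∩ Icc (-x - y) (-y) = Icc (-x - y) 0 := by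
    rw [Icc_inter_Icc, max_eq_right (by linarith [hy.2]), min_eq_left (by linarith [hy.2])]
  simp only [hintegrand]
  rw [setIntegral_indicator measurableSet_Icc, hIcc, integral_const_mul,
    integral_Icc_eq_integral_Ioc, ← intervalIntegral.integral_of_le (by linarith [hy.1]),
    integral_exp_mul_complex (neg_ne_zero.2 hlb)]
  have hexp : exp ((l + b) * x) * exp (b * y) = exp (-l * y) * exp (-(l + b) * ↑(-x - y)) := by
    rw [← exp_add, ← exp_add]
    push_cast
    ring_nf
  rw [hexp, ofReal_zero, mul_zero, exp_zero, div_neg]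
  ring

namespace WHFactor

variable {Ω : Type*} [MeasurableSpace Ω] {L : KilledLevy Ω} (W : WHFactor L) (x : ℝ)

instance isFiniteMeasure_restrict_Icc : IsFiniteMeasure (W.Uh.restrict (Icc (-x) 0)) := by
  refine ⟨?_⟩
  rw [Measure.restrict_apply_univ]
  refine (measure_mono fun y (hy : y ∈ Icc (-x) 0) => ?_).trans_lt
    ((W.hUhint (-1) (by norm_num)).measure_norm_ge_lt_top (Real.exp_pos (-x)))
  show Real.exp (-x) ≤ ‖exp (-(-1) * (y : ℂ))‖
  simpa [Complex.norm_exp] using hy.1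

lemma integrable_cexp_mul_restrict_Icc (a : ℂ) :
    Integrable (fun y : ℝ => exp (a * y)) (W.Uh.restrict (Icc (-x) 0)) := by
  refine Integrable.of_bound (by fun_prop) (Real.exp (‖a‖ * x)) ?_
  filter_upwards [ae_restrict_mem measurableSet_Icc] with y hy
  exact norm_cexp_mul_le le_rfl (by simpa using abs_le_of_mem_Icc_neg hy)

def boxMeasure : Measure (ℝ × ℝ) :=
  (W.Uh.restrict (Icc (-x) 0)).prod (volume.restrict (Icc (-x) 0))

instance : IsFiniteMeasure (W.boxMeasure x) := by
  unfold boxMeasure; infer_instance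

lemma ae_mem_boxMeasure : ∀ᵐ p ∂W.boxMeasure x, p.1 ∈ Icc (-x) 0 ∧ p.2 ∈ Icc (-x) 0 :=
  (Measure.quasiMeasurePreserving_fst.ae (ae_restrict_mem measurableSet_Icc)).and
    (Measure.quasiMeasurePreserving_snd.ae (ae_restrict_mem measurableSet_Icc))

lemma ae_norm_neg_snd_le : ∀ᵐ p ∂W.boxMeasure x, ‖-(p.2 : ℂ)‖ ≤ x := by
  filter_upwards [W.ae_mem_boxMeasure x] with p hp
  simpa using abs_le_of_mem_Icc_neg hp.2

lemma ae_norm_neg_add_le : ∀ᵐ p ∂W.boxMeasure x, ‖-((p.2 : ℂ) + p.1)‖ ≤ 2 * x := by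
  filter_upwards [W.ae_mem_boxMeasure x] with p hp
  rw [norm_neg, ← ofReal_add, norm_real, Real.norm_eq_abs, two_mul]
  exact (abs_add_le _ _).trans
    (add_le_add (abs_le_of_mem_Icc_neg hp.2) (abs_le_of_mem_Icc_neg hp.1))

lemma integrable_indicator_add :
    Integrable (fun p : ℝ × ℝ => (Icc (-x) (0 : ℝ)).indicator (1 : ℝ → ℂ) (p.2 + p.1))
      (W.boxMeasure x) := by
  refine Integrable.of_bound ((measurable_one.indicator measurableSet_Icc).comp
    (measurable_snd.add measurable_fst)).aestronglyMeasurable 1 (.of_forall fun p => ?_)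
  simpa using norm_indicator_le_norm_self (1 : ℝ → ℂ) (p.2 + p.1)

lemma integrable_indicator_mul_pow_mul_cexp (n : ℕ) (β : ℂ) :
    Integrable (fun p : ℝ × ℝ => (Icc (-x) (0 : ℝ)).indicator (1 : ℝ → ℂ) (p.2 + p.1) *
      (p.2 : ℂ) ^ n * exp (β * -(p.2 : ℂ))) (W.boxMeasure x) := by
  refine ((W.integrable_indicator_add x).mul_bdd (c := x ^ n) (by fun_prop) ?_).mul_cexp
    (by fun_prop) (W.ae_norm_neg_snd_le x) β
  filter_upwards [W.ae_norm_neg_snd_le x] with p hp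
  simpa [norm_pow] using pow_le_pow_left₀ (norm_nonneg _) hp n

end WHFactor

namespace WHNorm

variable {Ω : Type*} [MeasurableSpace Ω] {L : KilledLevy Ω} {A : AssumptionA L} (W : WHNorm L A)
  (x : ℝ)

lemma mfun_quotient_eq_integral_boxMeasure {l b : ℂ} (hlb : l + b ≠ 0) :
    (exp ((l + b) * x) * W.UB x (-b) - W.UB x l) / (l + b) =
      ∫ p, (Icc (-x) (0 : ℝ)).indicator (1 : ℝ → ℂ) (p.2 + p.1) *
        exp (l * -((p.2 : ℂ) + p.1)) * exp (b * -(p.2 : ℂ)) ∂W.boxMeasure x := by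
  have hUB : W.UB x (-b) = ∫ y in Icc (-x) 0, exp (b * y) ∂W.Uh := by
    simp only [UB, neg_neg]
  calc (exp ((l + b) * x) * W.UB x (-b) - W.UB x l) / (l + b)
      = ∫ y in Icc (-x) 0,
          (exp ((l + b) * x) * exp (b * y) - exp (-l * y)) / (l + b) ∂W.Uh := by
        rw [integral_div, integral_sub ((W.integrable_cexp_mul_restrict_Icc x b).const_mul _)
          (W.integrable_cexp_mul_restrict_Icc x (-l)), integral_const_mul, hUB, UB]
    _ = ∫ y in Icc (-x) 0, (∫ u in Icc (-x) 0,
          (Icc (-x) (0 : ℝ)).indicator (1 : ℝ → ℂ) (u + y) *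
            exp (l * -((u : ℂ) + y)) * exp (b * -(u : ℂ))) ∂W.Uh :=
        setIntegral_congr_fun measurableSet_Icc fun y hy =>
          (integral_Icc_indicator_mul_cexp hy hlb).symm
    _ = _ := integral_integral <|
        ((W.integrable_indicator_add x).mul_cexp (by fun_prop) (W.ae_norm_neg_add_le x) l).mul_cexp
          (by fun_prop) (W.ae_norm_neg_snd_le x) b

lemma integral_ite_eq_integral_boxMeasure (n : ℕ) (β l : ℂ) :
    ∫ y in Icc (-x) (0 : ℝ), (∫ u in Icc (-x) (0 : ℝ),
        (if -x ≤ u + y ∧ u + y ≤ 0 then exp (-l * (u + y)) * (u : ℂ) ^ n * exp (-β * u)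
        else 0)) ∂W.Uh =
      ∫ p, (Icc (-x) (0 : ℝ)).indicator (1 : ℝ → ℂ) (p.2 + p.1) * (p.2 : ℂ) ^ n *
        exp (β * -(p.2 : ℂ)) * exp (l * -((p.2 : ℂ) + p.1)) ∂W.boxMeasure x := by
  refine Eq.trans ?_ (integral_integral (f := fun y u =>
    (Icc (-x) (0 : ℝ)).indicator (1 : ℝ → ℂ) (u + y) * (u : ℂ) ^ n *
        exp (β * -(u : ℂ)) * exp (l * -((u : ℂ) + y))) ?_)
  · refine integral_congr_ae (.of_forall fun y => integral_congr_ae (.of_forall fun u => ?_))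
    by_cases h : -x ≤ u + y ∧ u + y ≤ 0
    · simp only [if_pos h, indicator_of_mem (show u + y ∈ Icc (-x) 0 from h), Pi.one_apply]
      rw [neg_mul_comm l, neg_mul_comm β]
      ring
    · simp [h]
  · exact (W.integrable_indicator_mul_pow_mul_cexp x n β).mul_cexp (by fun_prop)
      (W.ae_norm_neg_add_le x) l

lemma mfun_eq_integral_boxMeasure (i : Fin W.m) {l : ℂ} (hl : l ≠ -W.β i) :
    W.mfun x l i =
      ∫ p, (Icc (-x) (0 : ℝ)).indicator (1 : ℝ → ℂ) (p.2 + p.1) * (p.2 : ℂ) ^ W.mi i *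
        exp (W.β i * -(p.2 : ℂ)) * exp (l * -((p.2 : ℂ) + p.1)) ∂W.boxMeasure x := by
  have hresolvent :
      (fun b => (exp ((l + b) * x) * W.UB x (-b) - W.UB x l) / (l + b)) =ᶠ[nhds (W.β i)]
      fun b => ∫ p, (Icc (-x) (0 : ℝ)).indicator (1 : ℝ → ℂ) (p.2 + p.1) *
        exp (l * -((p.2 : ℂ) + p.1)) * exp (b * -(p.2 : ℂ)) ∂W.boxMeasure x := by
    filter_upwards [eventually_ne_nhds (a := W.β i) (b := -l) fun h => hl (by rw [h, neg_neg])]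
      with b hb
    exact W.mfun_quotient_eq_integral_boxMeasure x (by contrapose! hb; linear_combination hb)
  rw [mfun, hresolvent.iteratedDeriv_eq, iteratedDeriv_integral_mul_cexp
      ((W.integrable_indicator_add x).mul_cexp (by fun_prop) (W.ae_norm_neg_add_le x) l)
      (by fun_prop) (W.ae_norm_neg_snd_le x),
    ← integral_const_mul]
  have hsign : (-1 : ℂ) ^ W.mi i * (-1) ^ W.mi i = 1 := by rw [← mul_pow]; norm_num
  congr 1 with p
  rw [neg_pow (p.2 : ℂ)]
  linear_combination (Icc (-x) (0 : ℝ)).indicator (1 : ℝ → ℂ) (p.2 + p.1) *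
    (p.2 : ℂ) ^ W.mi i * exp (W.β i * -(p.2 : ℂ)) * exp (l * -((p.2 : ℂ) + p.1)) * hsign

end WHNorm

theorem statement4_general {Ω : Type*} [MeasurableSpace Ω] {L : KilledLevy Ω} {A : AssumptionA L}
    (W : WHNorm L A) (x : ℝ) (i : Fin W.m) :
    (∀ l : ℂ, l ≠ -W.β i →
      W.mfun x l i =
        ∫ y in Icc (-x) (0 : ℝ), (∫ u in Icc (-x) (0 : ℝ),
          (if -x ≤ u + y ∧ u + y ≤ 0 then
            Complex.exp (-l * (u + y)) * (u : ℂ) ^ (W.mi i) * Complex.exp (-W.β i * u)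
          else 0)) ∂W.Uh) ∧
    Differentiable ℂ (fun l : ℂ =>
      ∫ y in Icc (-x) (0 : ℝ), (∫ u in Icc (-x) (0 : ℝ),
        (if -x ≤ u + y ∧ u + y ≤ 0 then
          Complex.exp (-l * (u + y)) * (u : ℂ) ^ (W.mi i) * Complex.exp (-W.β i * u)
        else 0)) ∂W.Uh) := by
  simp only [W.integral_ite_eq_integral_boxMeasure]
  exact ⟨fun l hl => W.mfun_eq_integral_boxMeasure x i hl,
    differentiable_integral_mul_cexp (W.integrable_indicator_mul_pow_mul_cexp x _ _)
      (by fun_prop) (W.ae_norm_neg_add_le x)⟩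

/-- Proposition 2.6 (1). For `x > 0` and `i`, the function
`m_i(x,·)` coincides off `-β_i` with the (entire) Laplace transform of the restriction
to `[-x,0]` of the convolution of `1_{[-x,0]}(u) u^{m_i} e^{-β_i u} du` with
`1_{[-x,0]}(y) Û(dy)`. -/
theorem statement4 {Ω : Type*} [MeasurableSpace Ω] {L : KilledLevy Ω} {A : AssumptionA L}
    (W : WHNorm L A) (x : ℝ) (hx : 0 < x) (i : Fin W.m) :
    (∀ l : ℂ, l ≠ -W.β i →
      W.mfun x l i =
        ∫ y in Icc (-x) (0 : ℝ), (∫ u in Icc (-x) (0 : ℝ),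
          (if -x ≤ u + y ∧ u + y ≤ 0 then
            Complex.exp (-l * (u + y)) * (u : ℂ) ^ (W.mi i) * Complex.exp (-W.β i * u)
          else 0)) ∂W.Uh) ∧
    Differentiable ℂ (fun l : ℂ =>
      ∫ y in Icc (-x) (0 : ℝ), (∫ u in Icc (-x) (0 : ℝ),
        (if -x ≤ u + y ∧ u + y ≤ 0 then
          Complex.exp (-l * (u + y)) * (u : ℂ) ^ (W.mi i) * Complex.exp (-W.β i * u)
        else 0)) ∂W.Uh) :=
  statement4_general W x i
end
end

section
/- For every x > 0, every j ∈ {1,…,n} and every λ with Re λ < 0 and λ ≠ -γ_j, the quantity n_j(x,λ) := (∂^{n_j}/(-∂γ)^{n_j})[ (e^{-λx} Û_{(-∞,-x)}(λ) - e^{γx} Û_{(-∞,-x)}(-γ)) / (λ+γ) ] evaluated at γ = γ_j equals ∫_{(-∞,0)} e^{-λz} ν_j(dz), where ν_j is the restriction to (-∞,0) of the convolution of the measure y^{n_j} e^{-γ_j y} 1_{y>0} dy with the restriction to (-∞,0) of the shift by +x of the measure 1_{(-∞,-x)}(y) Û(dy) (i.e. the measure B ↦ Û((B - x) ∩ (-∞,-x))).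 -/
open MeasureTheory ProbabilityTheory Filter Set Complex
open scoped ENNReal NNReal

noncomputable section

open scoped Nat Topology

/-!
Pair `Û` restricted to `(-∞,-x)` (variable `y`) with Lebesgue measure on `(0,∞)` (variable `u`).
For `Re γ > 0`, Fubini and `∫₀^{-(y+x)} e^{-(λ+γ)u} du = (1 - e^{(λ+γ)(y+x)}) / (λ+γ)` turn
the function differentiated in `n_j(x,λ)`,
`(e^{-λx} Û_{(-∞,-x)}(λ) - e^{γx} Û_{(-∞,-x)}(-γ)) / (λ+γ)`,
into `∫∫ 1_{u+y+x<0} e^{-λ(u+y+x)} e^{-γu}`, a Laplace transform in `γ`. Differentiating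
`n_j` times under the integral sign brings down `(-u)^{n_j}`; domination comes from
`u^k e^{-ρu} ≤ k!/ρ^k`.
-/

lemma Real.pow_mul_exp_neg_le {ρ t : ℝ} (hρ : 0 < ρ) (ht : 0 ≤ t) (k : ℕ) :
    t ^ k * Real.exp (-(ρ * t)) ≤ k ! / ρ ^ k := by
  have h := Real.pow_div_factorial_le_exp _ (mul_nonneg hρ.le ht) k
  rw [mul_pow, div_le_iff₀ (by positivity)] at h
  rw [le_div_iff₀ (by positivity), Real.exp_neg, mul_right_comm, ← div_eq_mul_inv,
    div_le_iff₀ (Real.exp_pos _)]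
  linarith

lemma norm_mul_pow_mul_cexp_le {σ ρ : ℝ} (hρ : 0 < ρ) {g : ℂ} (hg : σ + ρ ≤ g.re) {t : ℝ}
    (ht : 0 ≤ t) (z : ℂ) (k : ℕ) :
    ‖z * (t : ℂ) ^ k * cexp (-g * t)‖ ≤ k ! / ρ ^ k * ‖z * cexp (-σ * t)‖ := by
  have hexp : Real.exp (-g.re * t) ≤ Real.exp (-(ρ * t)) * Real.exp (-σ * t) := by
    rw [← Real.exp_add]
    exact Real.exp_le_exp.2 (by nlinarith)
  simp only [norm_mul, norm_pow, Complex.norm_exp, Complex.norm_real, Real.norm_eq_abs,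
    abs_of_nonneg ht, ← ofReal_neg, neg_re, mul_re, ofReal_re, ofReal_im,
    mul_zero, sub_zero]
  calc ‖z‖ * t ^ k * Real.exp (-g.re * t)
      ≤ ‖z‖ * (t ^ k * Real.exp (-(ρ * t))) * Real.exp (-σ * t) := by
        rw [mul_assoc, mul_assoc, mul_assoc]
        gcongr
    _ ≤ ‖z‖ * (k ! / ρ ^ k) * Real.exp (-σ * t) := by
        gcongr; exact Real.pow_mul_exp_neg_le hρ ht k
    _ = k ! / ρ ^ k * (‖z‖ * Real.exp (-σ * t)) := by ring

section LaplaceTransform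

variable {α : Type*} [MeasurableSpace α] {μ : Measure α} {f : α → ℂ} {τ : α → ℝ}

lemma hasDerivAt_mul_pow_mul_cexp (z : ℂ) (t : ℝ) (k : ℕ) (g : ℂ) :
    HasDerivAt (fun g => z * (t : ℂ) ^ k * cexp (-g * t))
      (-(z * (t : ℂ) ^ (k + 1) * cexp (-g * t))) g := by
  have h := (((hasDerivAt_id' g).neg.mul_const (t : ℂ)).cexp).const_mul (z * (t : ℂ) ^ k)
  exact h.congr_deriv (by simp only [Pi.neg_apply]; ring)

variable (hf : AEStronglyMeasurable f μ) (hτ : AEMeasurable τ μ) (hτ0 : ∀ᵐ a ∂μ, 0 ≤ τ a)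
  (hint : ∀ g : ℂ, 0 < g.re → Integrable (fun a => f a * cexp (-g * τ a)) μ)
include hf hτ

lemma aestronglyMeasurable_mul_pow_mul_cexp (k : ℕ) (g : ℂ) :
    AEStronglyMeasurable (fun a => f a * (τ a : ℂ) ^ k * cexp (-g * τ a)) μ := by
  have hτc : AEStronglyMeasurable (fun a => (τ a : ℂ)) μ :=
    (Complex.measurable_ofReal.comp_aemeasurable hτ).aestronglyMeasurable
  exact (hf.mul (hτc.pow k)).mul (continuous_exp.comp_aestronglyMeasurable (hτc.const_mul (-g)))

include hτ0 hint

lemma integrable_mul_pow_mul_cexp (k : ℕ) {g : ℂ} (hg : 0 < g.re) :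
    Integrable (fun a => f a * (τ a : ℂ) ^ k * cexp (-g * τ a)) μ := by
  refine ((hint (g.re / 2 : ℝ) (by simpa using hg)).norm.const_mul
    (k ! / (g.re / 2) ^ k)).mono' (aestronglyMeasurable_mul_pow_mul_cexp hf hτ k g) ?_
  filter_upwards [hτ0] with a ha
  exact norm_mul_pow_mul_cexp_le (by linarith) (by simp) ha (f a) k

lemma hasDerivAt_integral_mul_pow_mul_cexp (k : ℕ) {g₀ : ℂ} (hg₀ : 0 < g₀.re) :
    HasDerivAt (fun g => ∫ a, f a * (τ a : ℂ) ^ k * cexp (-g * τ a) ∂μ)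
      (-∫ a, f a * (τ a : ℂ) ^ (k + 1) * cexp (-g₀ * τ a) ∂μ) g₀ := by
  set r := g₀.re / 2 with hr_def
  have hr : 0 < r := half_pos hg₀
  have hball : ∀ g ∈ Metric.ball g₀ r, r / 2 + r / 2 ≤ g.re := by
    intro g hg
    have := (abs_re_le_norm (g - g₀)).trans_lt (mem_ball_iff_norm.1 hg)
    rw [sub_re] at this
    linarith [(abs_lt.1 this).1]
  rw [← integral_neg]
  refine (hasDerivAt_integral_of_dominated_loc_of_deriv_le (Metric.ball_mem_nhds g₀ hr)
    (.of_forall fun g => aestronglyMeasurable_mul_pow_mul_cexp hf hτ k g)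
    (integrable_mul_pow_mul_cexp hf hτ hτ0 hint k hg₀)
    (aestronglyMeasurable_mul_pow_mul_cexp hf hτ (k + 1) g₀).neg
    (bound := fun a => (k + 1)! / (r / 2) ^ (k + 1) * ‖f a * cexp (-(r / 2 : ℝ) * τ a)‖)
    ?_ ((hint (r / 2 : ℝ) (by simpa using hr)).norm.const_mul _)
    (.of_forall fun a g _ => hasDerivAt_mul_pow_mul_cexp (f a) (τ a) k g)).2
  filter_upwards [hτ0] with a ha g hg
  rw [norm_neg]
  exact norm_mul_pow_mul_cexp_le (by linarith) (by simpa using hball g hg) ha (f a) (k + 1)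

theorem iteratedDeriv_integral_mul_cexp_s5 (n : ℕ) {g : ℂ} (hg : 0 < g.re) :
    iteratedDeriv n (fun g => ∫ a, f a * cexp (-g * τ a) ∂μ) g =
      (-1) ^ n * ∫ a, f a * (τ a : ℂ) ^ n * cexp (-g * τ a) ∂μ := by
  induction n generalizing g with
  | zero => simp
  | succ n ih =>
    have hev : iteratedDeriv n (fun g => ∫ a, f a * cexp (-g * τ a) ∂μ) =ᶠ[𝓝 g]
        fun g => (-1) ^ n * ∫ a, f a * (τ a : ℂ) ^ n * cexp (-g * τ a) ∂μ := by
      filter_upwards [(isOpen_lt continuous_const continuous_re).mem_nhds hg] with g' hg'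
      exact ih hg'
    rw [iteratedDeriv_succ, hev.deriv_eq,
      ((hasDerivAt_integral_mul_pow_mul_cexp hf hτ hτ0 hint n hg).const_mul _).deriv]
    ring

end LaplaceTransform

def truncatedExp (x : ℝ) (l : ℂ) (p : ℝ × ℝ) : ℂ :=
  if p.2 + (p.1 + x) < 0 then cexp (-l * (p.2 + (p.1 + x))) else 0

@[fun_prop]
lemma measurable_truncatedExp (x : ℝ) (l : ℂ) : Measurable (truncatedExp x l) :=
  Measurable.ite (measurableSet_lt (by fun_prop) measurable_const) (by fun_prop) measurable_const

lemma norm_truncatedExp_mul_cexp_le (x : ℝ) {l g : ℂ} {s c : ℝ} (hsl : s ≤ -l.re)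
    (hsc : s + c ≤ g.re) {p : ℝ × ℝ} (hp : 0 ≤ p.2) :
    ‖truncatedExp x l p * cexp (-g * p.2)‖ ≤ Real.exp (s * (p.1 + x)) * Real.exp (-c * p.2) := by
  rw [truncatedExp]
  split_ifs with h
  · simp only [norm_mul, Complex.norm_exp, ← Real.exp_add, mul_re, neg_re, add_re, ofReal_re,
      neg_im, add_im, ofReal_im, add_zero, mul_zero, sub_zero]
    exact Real.exp_le_exp.2 (by nlinarith)
  · rw [zero_mul, norm_zero]
    positivity

lemma ae_snd_mem_Ioi (ν : Measure ℝ) [SFinite ν] (t : Set ℝ) :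
    ∀ᵐ p ∂(ν.restrict t).prod ((volume : Measure ℝ).restrict (Ioi 0)), 0 < p.2 :=
  Measure.quasiMeasurePreserving_snd.ae (ae_restrict_mem measurableSet_Ioi)

lemma integrable_truncatedExp_mul_cexp {ν : Measure ℝ} [SFinite ν]
    (hν : ∀ l : ℂ, l.re < 0 → Integrable (fun y : ℝ => cexp (-l * y)) ν) (x : ℝ) {l : ℂ}
    (hl : l.re < 0) {g : ℂ} (hg : 0 < g.re) (t : Set ℝ) :
    Integrable (fun p => truncatedExp x l p * cexp (-g * p.2))
      ((ν.restrict t).prod (volume.restrict (Ioi 0))) := by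
  set s := min (-l.re) (g.re / 2)
  have hs : 0 < s := lt_min (by linarith) (by linarith)
  have hexp : Integrable (fun y : ℝ => Real.exp (s * (y + x))) (ν.restrict t) := by
    refine (((hν (-s : ℝ) (by simpa using hs)).norm.mul_const (Real.exp (s * x))).restrict).congr
      (.of_forall fun y => ?_)
    simp only [Complex.norm_exp, ← ofReal_neg, neg_neg, ← ofReal_mul, ofReal_re, ← Real.exp_add,
      mul_add]
  refine (hexp.mul_prod (exp_neg_integrableOn_Ioi 0 (half_pos hg))).mono' ?_ ?_
  · fun_prop
  · filter_upwards [ae_snd_mem_Ioi ν t] with p hp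
    exact norm_truncatedExp_mul_cexp_le x (min_le_left _ _)
      (by linarith [min_le_right (-l.re) (g.re / 2)]) (le_of_lt hp)

lemma integral_truncatedExp_mul_cexp {x : ℝ} {l g : ℂ} (hlg : l + g ≠ 0) {y : ℝ}
    (hy : y + x ≤ 0) :
    ∫ u in Ioi (0 : ℝ), truncatedExp x l (y, u) * cexp (-g * u) =
      (cexp (-l * (y + x)) - cexp (g * (y + x))) / (l + g) := by
  have hind : ∀ u : ℝ, truncatedExp x l (y, u) * cexp (-g * u) =
      (Iio (-(y + x))).indicator (fun u : ℝ => cexp (-l * (y + x)) * cexp (-(l + g) * u)) u := by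
    intro u
    simp only [truncatedExp, indicator, mem_Iio]
    split_ifs with h₁ h₂ h₂
    · rw [← exp_add, ← exp_add]
      ring_nf
    · exact absurd (by linarith) h₂
    · exact absurd (by linarith) h₁
    · rw [zero_mul]
  simp_rw [hind]
  rw [setIntegral_indicator measurableSet_Iio, Ioi_inter_Iio, ← integral_Ioc_eq_integral_Ioo,
    ← intervalIntegral.integral_of_le (by linarith), intervalIntegral.integral_const_mul,
    integral_exp_mul_complex (neg_ne_zero.2 hlg), ofReal_zero, mul_zero, exp_zero,
    mul_div_assoc', mul_sub, mul_one, ← exp_add, div_neg, ← neg_div, neg_sub]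
  push_cast
  ring_nf

lemma integral_Iio_cexp_sub_cexp_div {Ω : Type*} [MeasurableSpace Ω] {L : KilledLevy Ω}
    {A : AssumptionA L} (W : WHNorm L A) {l g : ℂ} (hl : l.re < 0) (hg : 0 < g.re) (x : ℝ) :
    ∫ y in Iio (-x), (cexp (-l * (y + x)) - cexp (g * (y + x))) / (l + g) ∂W.Uh =
      (cexp (-l * x) * W.UT x l - cexp (g * x) * W.UT x (-g)) / (l + g) := by
  have hsplit : ∀ (c : ℂ) (y : ℝ), cexp (c * (y + x)) = cexp (c * x) * cexp (c * y) := by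
    intro c y
    rw [← exp_add]
    ring_nf
  have hint : ∀ c : ℂ, c.re < 0 →
      Integrable (fun y : ℝ => cexp (-c * x) * cexp (-c * y)) (W.Uh.restrict (Iio (-x))) :=
    fun c hc => (W.hUhint c hc).restrict.const_mul _
  have hint_g := hint (-g) (by simpa using hg)
  simp only [neg_neg] at hint_g
  simp_rw [hsplit (-l), hsplit g]
  rw [integral_div, integral_sub (hint l hl) hint_g, integral_const_mul, integral_const_mul,
    WHNorm.UT, WHNorm.UT]
  simp only [neg_neg]

lemma integral_prod_truncatedExp_mul_cexp {Ω : Type*} [MeasurableSpace Ω] {L : KilledLevy Ω}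
    {A : AssumptionA L} (W : WHNorm L A) (x : ℝ) {l g : ℂ} (hl : l.re < 0) (hg : 0 < g.re)
    (hlg : l + g ≠ 0) :
    ∫ p, truncatedExp x l p * cexp (-g * p.2)
        ∂(W.Uh.restrict (Iio (-x))).prod (volume.restrict (Ioi 0)) =
      (cexp (-l * x) * W.UT x l - cexp (g * x) * W.UT x (-g)) / (l + g) := by
  have := W.hUhsf
  rw [integral_prod _ (integrable_truncatedExp_mul_cexp W.hUhint x hl hg _),
    setIntegral_congr_fun measurableSet_Iio
      fun y hy => integral_truncatedExp_mul_cexp hlg (by linarith [mem_Iio.1 hy])]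
  exact integral_Iio_cexp_sub_cexp_div W hl hg x

theorem statement5_general {Ω : Type*} [MeasurableSpace Ω] {L : KilledLevy Ω} {A : AssumptionA L}
    (W : WHNorm L A) (x : ℝ) (j : Fin A.n) :
    ∀ l : ℂ, l.re < 0 → l ≠ -A.γ j →
      W.nfun x l j =
        ∫ y in Iio (-x), (∫ u in Ioi (0 : ℝ),
          (if u + (y + x) < 0 then
            Complex.exp (-l * (u + (y + x))) * (u : ℂ) ^ (A.nj j) *
              Complex.exp (-A.γ j * u)
          else 0)) ∂W.Uh := by
  intro l hl hlγ
  have := W.hUhsf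
  set μ := (W.Uh.restrict (Iio (-x))).prod ((volume : Measure ℝ).restrict (Ioi 0))
  have hf : AEStronglyMeasurable (truncatedExp x l) μ := by fun_prop
  have hτ : AEMeasurable Prod.snd μ := measurable_snd.aemeasurable
  have hτ0 : ∀ᵐ p ∂μ, 0 ≤ p.2 := (ae_snd_mem_Ioi _ _).mono fun _ => le_of_lt
  have hint (g : ℂ) (hg : 0 < g.re) :=
    integrable_truncatedExp_mul_cexp W.hUhint x hl hg (Iio (-x))
  have hev : (fun g => (Complex.exp (-l * x) * W.UT x l - Complex.exp (g * x) * W.UT x (-g)) /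
      (l + g)) =ᶠ[𝓝 (A.γ j)] fun g => ∫ p, truncatedExp x l p * cexp (-g * p.2) ∂μ := by
    filter_upwards [(isOpen_lt continuous_const continuous_re).mem_nhds (A.hγ j),
      (continuous_const.add continuous_id).continuousAt.eventually_ne
        (fun h => hlγ (eq_neg_of_add_eq_zero_left h))] with g hg hlg
    exact (integral_prod_truncatedExp_mul_cexp W x hl hg hlg).symm
  rw [WHNorm.nfun, hev.iteratedDeriv_eq,
    iteratedDeriv_integral_mul_cexp_s5 hf hτ hτ0 hint _ (A.hγ j), ← mul_assoc, ← mul_pow,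
    neg_one_mul, neg_neg, one_pow, one_mul,
    integral_prod _ (integrable_mul_pow_mul_cexp hf hτ hτ0 hint _ (A.hγ j))]
  simp only [truncatedExp, ite_mul, zero_mul]

/-- Proposition 2.6 (2). For `x > 0`, `j`, and `Re λ < 0`, `λ ≠ -γ_j`,
the quantity `n_j(x,λ)` is the Laplace transform, at `λ`, of the restriction to `(-∞,0)`
of the convolution of `y^{n_j} e^{-γ_j y} 1_{y>0} dy` with the restriction to `(-∞,0)`
of the shift by `+x` of `1_{(-∞,-x)}(y) Û(dy)`. -/
theorem statement5 {Ω : Type*} [MeasurableSpace Ω] {L : KilledLevy Ω} {A : AssumptionA L}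
    (W : WHNorm L A) (x : ℝ) (hx : 0 < x) (j : Fin A.n) :
    ∀ l : ℂ, l.re < 0 → l ≠ -A.γ j →
      W.nfun x l j =
        ∫ y in Iio (-x), (∫ u in Ioi (0 : ℝ),
          (if u + (y + x) < 0 then
            Complex.exp (-l * (u + (y + x))) * (u : ℂ) ^ (A.nj j) *
              Complex.exp (-A.γ j * u)
          else 0)) ∂W.Uh :=
  statement5_general W x j
end
end
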